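/- arXiv:2505.13849 — 6 statements merged into one kernel-verified Lean document; each statement's English description precedes it below -/
import Mathlib

section
/- Let Ω be a nonempty finite set, G ≤ Sym(Ω) a permutation group, and n ≥ 1 an integer. Then G is n-complete if and only if it is not the case that (G is trivial and n = 1), and for every α ∈ Ω the point stabiliser G_α, regarded as a permutation group on Ω \ {α}, is (n−1)-complete. -/
/-- `B` is a base for the permutation group `G ≤ Sym(Ω)`: its pointwise
stabiliser in `G` is trivial. -/
def IsBase {Ω : Type*} (G : Subgroup (Equiv.Perm Ω)) (B : Set Ω) : Prop :=
  ∀ g ∈ G, (∀ b ∈ B, g b = b) → g = 1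

/-- The base size of `G` relative to a set `Δ` of points: the minimum
cardinality of a base for `G` contained in `Δ`. -/
noncomputable def baseSizeOn {Ω : Type*} (G : Subgroup (Equiv.Perm Ω)) (Δ : Set Ω) : ℕ :=
  sInf {n | ∃ B : Set Ω, B ⊆ Δ ∧ IsBase G B ∧ B.ncard = n}

/-- `G`, regarded as acting on the set `Δ`, is `n`-complete: its base size
(relative to `Δ`) is `n` and every `n`-element subset of `Δ` is a base. -/
def IsNCompleteOn {Ω : Type*} (G : Subgroup (Equiv.Perm Ω)) (Δ : Set Ω) (n : ℕ) : Prop :=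
  baseSizeOn G Δ = n ∧ ∀ B : Set Ω, B ⊆ Δ → B.ncard = n → IsBase G B

/-! A set `B ∌ α` is a base for `G_α` exactly when `insert α B` is a base for `G`. Hence the
`n`-subsets of `Ω` are all bases of `G` iff, for every `α`, the `(n-1)`-subsets of `Ω \ {α}` are all
bases of `G_α`; and `b(G) ≤ b(G_α) + 1`, with equality when `α` lies in a minimal base of `G`.
A minimal base is empty only for `G = 1`, which is why `G = 1, n = 1` is excluded. -/

open Equiv MulAction

section

variable {Ω : Type*} {G : Subgroup (Perm Ω)}

lemma isBase_univ : IsBase G Set.univ :=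
  fun _ _ hfix => Equiv.ext fun x => hfix x (Set.mem_univ x)

lemma isBase_empty_iff : IsBase G ∅ ↔ G = ⊥ := by
  simp only [IsBase, Set.mem_empty_iff_false, IsEmpty.forall_iff, implies_true, forall_const,
    ← Subgroup.mem_bot, ← SetLike.le_def, le_bot_iff]

lemma isBase_inf_stabilizer_iff {α : Ω} {B : Set Ω} :
    IsBase (G ⊓ stabilizer (Perm Ω) α) B ↔ IsBase G (insert α B) := by
  simp only [IsBase, Subgroup.mem_inf, mem_stabilizer_iff, Perm.smul_def, Set.forall_mem_insert]
  exact ⟨fun h g hg hfix => h g ⟨hg, hfix.1⟩ hfix.2, fun h g hg hfix => h g hg.1 ⟨hg.2, hfix⟩⟩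

lemma isBase_compl_singleton (α : Ω) : IsBase (G ⊓ stabilizer (Perm Ω) α) {α}ᶜ := by
  rw [isBase_inf_stabilizer_iff, Set.insert_eq, Set.union_compl_self]
  exact isBase_univ

lemma baseSizeOn_le {Δ B : Set Ω} (hBΔ : B ⊆ Δ) (hB : IsBase G B) : baseSizeOn G Δ ≤ B.ncard :=
  Nat.sInf_le ⟨B, hBΔ, hB, rfl⟩

lemma exists_isBase_ncard_eq_baseSizeOn {Δ : Set Ω} (hΔ : IsBase G Δ) :
    ∃ B ⊆ Δ, IsBase G B ∧ B.ncard = baseSizeOn G Δ :=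
  Nat.sInf_mem (s := {n | ∃ B ⊆ Δ, IsBase G B ∧ B.ncard = n}) ⟨_, Δ, subset_rfl, hΔ, rfl⟩

lemma baseSizeOn_bot (Δ : Set Ω) : baseSizeOn (⊥ : Subgroup (Perm Ω)) Δ = 0 :=
  Nat.le_zero.mp <| (baseSizeOn_le (Set.empty_subset Δ) (isBase_empty_iff.mpr rfl)).trans_eq
    (Set.ncard_empty Ω)

lemma baseSizeOn_le_of_forall_isBase {Δ : Set Ω} {n : ℕ} (hn : n ≤ Δ.ncard)
    (h : ∀ B ⊆ Δ, B.ncard = n → IsBase G B) : baseSizeOn G Δ ≤ n := by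
  obtain ⟨B, hBΔ, hBn⟩ := Set.exists_subset_card_eq hn
  exact (baseSizeOn_le hBΔ (h B hBΔ hBn)).trans_eq hBn

lemma baseSizeOn_univ_le_baseSizeOn_inf_stabilizer_add_one (α : Ω) :
    baseSizeOn G Set.univ ≤ baseSizeOn (G ⊓ stabilizer (Perm Ω) α) {α}ᶜ + 1 := by
  obtain ⟨B, -, hB, hBcard⟩ := exists_isBase_ncard_eq_baseSizeOn (isBase_compl_singleton (G := G) α)
  rw [isBase_inf_stabilizer_iff] at hB
  calc baseSizeOn G Set.univ ≤ (insert α B).ncard := baseSizeOn_le (Set.subset_univ _) hB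
    _ ≤ B.ncard + 1 := Set.ncard_insert_le α B
    _ = _ := by rw [hBcard]

variable [Finite Ω]

lemma IsBase.baseSizeOn_inf_stabilizer_add_one_le {B : Set Ω} (hB : IsBase G B) {β : Ω}
    (hβ : β ∈ B) : baseSizeOn (G ⊓ stabilizer (Perm Ω) β) {β}ᶜ + 1 ≤ B.ncard := by
  have hB' : IsBase (G ⊓ stabilizer (Perm Ω) β) (B \ {β}) := by
    rwa [isBase_inf_stabilizer_iff, Set.insert_sdiff_singleton, Set.insert_eq_of_mem hβ]
  have hle := baseSizeOn_le (Set.sdiff_subset_compl B {β}) hB'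
  rw [Set.ncard_sdiff_singleton_of_mem hβ] at hle
  have := (Set.ncard_pos (Set.toFinite B)).mpr ⟨β, hβ⟩
  omega

lemma forall_isBase_of_ncard_eq_succ_iff {m : ℕ} :
    (∀ B : Set Ω, B.ncard = m + 1 → IsBase G B) ↔
      ∀ α, ∀ B ⊆ {α}ᶜ, B.ncard = m → IsBase (G ⊓ stabilizer (Perm Ω) α) B := by
  refine ⟨fun h α B hBα hB => isBase_inf_stabilizer_iff.mpr (h _ ?_), fun h B hB => ?_⟩
  · rw [Set.ncard_insert_of_notMem (fun hα => hBα hα rfl), hB]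
  · obtain ⟨α, hα⟩ := Set.nonempty_of_ncard_ne_zero (s := B) (by omega)
    have := h α (B \ {α}) (Set.sdiff_subset_compl B {α})
      (by rw [Set.ncard_sdiff_singleton_of_mem hα, hB]; rfl)
    rwa [isBase_inf_stabilizer_iff, Set.insert_sdiff_singleton, Set.insert_eq_of_mem hα] at this

lemma baseSizeOn_inf_stabilizer_eq_of_forall_isBase {m : ℕ} (hb : baseSizeOn G Set.univ = m + 1) (α : Ω)
    (hα : ∀ B ⊆ {α}ᶜ, B.ncard = m → IsBase (G ⊓ stabilizer (Perm Ω) α) B) :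
    baseSizeOn (G ⊓ stabilizer (Perm Ω) α) {α}ᶜ = m := by
  refine le_antisymm (baseSizeOn_le_of_forall_isBase ?_ hα) ?_
  · have hm := hb ▸ baseSizeOn_le subset_rfl (isBase_univ (G := G))
    have hcompl := Set.ncard_compl_add_ncard {α}
    rw [Set.ncard_singleton, ← Set.ncard_univ] at hcompl
    omega
  · have := baseSizeOn_univ_le_baseSizeOn_inf_stabilizer_add_one (G := G) α
    omega

lemma baseSizeOn_univ_eq_succ [Nonempty Ω] {m : ℕ} (hG : ¬(G = ⊥ ∧ m = 0))
    (hb : ∀ α, baseSizeOn (G ⊓ stabilizer (Perm Ω) α) {α}ᶜ = m) :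
    baseSizeOn G Set.univ = m + 1 := by
  obtain ⟨α⟩ := ‹Nonempty Ω›
  refine le_antisymm ((baseSizeOn_univ_le_baseSizeOn_inf_stabilizer_add_one α).trans_eq
    (by rw [hb α])) ?_
  obtain ⟨B, -, hB, hBcard⟩ := exists_isBase_ncard_eq_baseSizeOn (isBase_univ (G := G))
  rcases B.eq_empty_or_nonempty with rfl | ⟨β, hβ⟩
  · have hbot := isBase_empty_iff.mp hB
    refine absurd ⟨hbot, ?_⟩ hG
    rw [← hb α, hbot, bot_inf_eq, baseSizeOn_bot]
  · exact hBcard ▸ hb β ▸ hB.baseSizeOn_inf_stabilizer_add_one_le hβ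

end

theorem statement_0 {Ω : Type*} [Fintype Ω] [Nonempty Ω]
    (G : Subgroup (Equiv.Perm Ω)) (n : ℕ) (hn : 1 ≤ n) :
    IsNCompleteOn G Set.univ n ↔
      ¬(G = ⊥ ∧ n = 1) ∧
        ∀ α : Ω, IsNCompleteOn (G ⊓ MulAction.stabilizer (Equiv.Perm Ω) α) {α}ᶜ (n - 1) := by
  obtain ⟨m, rfl⟩ := Nat.exists_eq_add_of_le' hn
  have hcomplete : (∀ B ⊆ Set.univ, B.ncard = m + 1 → IsBase G B) ↔
      ∀ α, ∀ B ⊆ {α}ᶜ, B.ncard = m → IsBase (G ⊓ stabilizer (Perm Ω) α) B := by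
    simpa only [Set.subset_univ, forall_const] using forall_isBase_of_ncard_eq_succ_iff
  simp only [IsNCompleteOn, hcomplete, Nat.add_sub_cancel, Nat.add_eq_right]
  constructor
  · rintro ⟨hb, hstab⟩
    refine ⟨fun ⟨hbot, _⟩ => ?_, fun α => ⟨baseSizeOn_inf_stabilizer_eq_of_forall_isBase hb α (hstab α), hstab α⟩⟩
    rw [hbot, baseSizeOn_bot] at hb
    exact m.succ_ne_zero hb.symm
  · rintro ⟨hG, hstab⟩
    exact ⟨baseSizeOn_univ_eq_succ hG fun α => (hstab α).1, fun α => (hstab α).2⟩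
end

section
/- Let Ω be a finite set and G ≤ Sym(Ω) a permutation group. If G is n-complete for some integer n ≥ 2, then G acts (n−1)-transitively on Ω. -/
/-- The base size `b(G)`: the minimum cardinality of a base for `G`. -/
noncomputable def baseSize {Ω : Type*} (G : Subgroup (Equiv.Perm Ω)) : ℕ :=
  sInf {n | ∃ B : Set Ω, IsBase G B ∧ B.ncard = n}

/-- `G` is `n`-complete: `b(G) = n` and every `n`-element subset of `Ω` is a
base for `G`. -/
def IsNComplete {Ω : Type*} (G : Subgroup (Equiv.Perm Ω)) (n : ℕ) : Prop :=
  baseSize G = n ∧ ∀ B : Set Ω, B.ncard = n → IsBase G B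

/-!
Fix a set `T` of `n - 2` points and let `K` be its pointwise stabiliser in `G`. Since no
`(n - 1)`-set is a base, every point outside `T` has a nontrivial stabiliser in `K`; since every
`n`-set is a base, a nontrivial element of `K` fixes at most one point outside `T`. The nontrivial
parts of the point stabilisers are therefore disjoint, and by orbit-stabiliser those of a single
orbit already account for at least `|K| / 2` of the `|K| - 1` nontrivial elements of `K`. Hence
`K` has only one orbit outside `T`, and transitivity of these pointwise stabilisers on the
complements builds up `(n - 1)`-transitivity one point at a time.
-/

open MulAction Finset Equiv

section FixedPointCounting

variable {K α : Type*} [Group K] [MulAction K α]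

variable (K) in
lemma card_stabilizer_mul_ncard_orbit (x : α) :
    Nat.card (stabilizer K x) * (orbit K x).ncard = Nat.card K := by
  rw [← index_stabilizer, Subgroup.card_mul_index]

variable [Finite K]

lemma sum_card_stabilizer_sub_one_le {U : Set α}
    (hU : ∀ k : K, k ≠ 1 → (fixedBy α k ∩ U).Subsingleton) {P : Finset α} (hP : ↑P ⊆ U) :
    ∑ w ∈ P, (Nat.card (stabilizer K w) - 1) ≤ Nat.card K - 1 := by
  classical
  have := Fintype.ofFinite K
  let nontrivialFixers (w : α) : Finset K := {k | k ∈ stabilizer K w ∧ k ≠ 1}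
  have hcard (w : α) : #(nontrivialFixers w) = Nat.card (stabilizer K w) - 1 := by
    rw [Nat.card_eq_fintype_card, Fintype.card_subtype, ← card_erase_of_mem
      (mem_filter.mpr ⟨mem_univ _, (stabilizer K w).one_mem⟩)]
    congr 1
    ext k
    simp [nontrivialFixers, and_comm]
  have hdisj : (P : Set α).PairwiseDisjoint nontrivialFixers := by
    intro z hz w hw hzw
    refine disjoint_left.mpr fun k hkz hkw => hzw ?_
    simp only [nontrivialFixers, mem_filter, mem_univ, true_and,
      mem_stabilizer_iff] at hkz hkw
    exact hU k hkz.2 ⟨hkz.1, hP hz⟩ ⟨hkw.1, hP hw⟩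
  calc ∑ w ∈ P, (Nat.card (stabilizer K w) - 1)
      = #(P.biUnion nontrivialFixers) := by simp only [card_biUnion hdisj, hcard]
    _ ≤ #(univ.erase (1 : K)) :=
      card_le_card fun k hk => by
        obtain ⟨w, -, hk⟩ := mem_biUnion.mp hk
        exact mem_erase.mpr ⟨(mem_filter.mp hk).2.2, mem_univ k⟩
    _ = Nat.card K - 1 := by
      rw [card_erase_of_mem (mem_univ _), card_univ, Nat.card_eq_fintype_card]

lemma card_le_two_mul_sum_card_stabilizer_sub_one {x : α} {O : Finset α} (hO : ↑O = orbit K x)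
    (hstab : ∀ w ∈ orbit K x, stabilizer K w ≠ ⊥) :
    Nat.card K ≤ 2 * ∑ w ∈ O, (Nat.card (stabilizer K w) - 1) := by
  have hpos : 0 < (orbit K x).ncard :=
    (Set.ncard_pos (Finite.finite_mulAction_orbit x)).mpr ⟨x, mem_orbit_self x⟩
  have hconst : ∀ w ∈ O, Nat.card (stabilizer K w) = Nat.card (stabilizer K x) := by
    intro w hw
    have hw : w ∈ orbit K x := hO ▸ hw
    have := card_stabilizer_mul_ncard_orbit K w
    rw [orbit_eq_iff.mpr hw, ← card_stabilizer_mul_ncard_orbit K x] at this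
    exact Nat.eq_of_mul_eq_mul_right hpos this
  have htwo : 2 ≤ Nat.card (stabilizer K x) :=
    (Subgroup.one_lt_card_iff_ne_bot _).mpr (hstab x (mem_orbit_self x))
  calc Nat.card K = #O * Nat.card (stabilizer K x) := by
        rw [← card_stabilizer_mul_ncard_orbit K x, ← hO, Set.ncard_coe_finset, mul_comm]
    _ ≤ #O * (2 * (Nat.card (stabilizer K x) - 1)) := Nat.mul_le_mul_left _ (by omega)
    _ = 2 * ∑ w ∈ O, (Nat.card (stabilizer K w) - 1) := by
      rw [sum_congr rfl fun w hw => by rw [hconst w hw], sum_const, smul_eq_mul]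
      ring

theorem mem_orbit_of_fixedBy_inter_subsingleton {U : Set α}
    (hUinv : ∀ k : K, ∀ z ∈ U, k • z ∈ U) (hstab : ∀ z ∈ U, stabilizer K z ≠ ⊥)
    (hfix : ∀ k : K, k ≠ 1 → (fixedBy α k ∩ U).Subsingleton) {x y : α} (hx : x ∈ U)
    (hy : y ∈ U) : y ∈ orbit K x := by
  classical
  by_contra hxy
  have horbit : ∀ z ∈ U, orbit K z ⊆ U := by
    rintro z hz _ ⟨k, rfl⟩
    exact hUinv k z hz
  obtain ⟨Ox, hOx⟩ := (Finite.finite_mulAction_orbit (M := K) x).exists_finset_coe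
  obtain ⟨Oy, hOy⟩ := (Finite.finite_mulAction_orbit (M := K) y).exists_finset_coe
  have hdisj : Disjoint Ox Oy := by
    rw [← disjoint_coe, hOx, hOy]
    refine (orbit.eq_or_disjoint x y).resolve_left fun h => hxy ?_
    rw [h]
    exact mem_orbit_self y
  have hsum := sum_card_stabilizer_sub_one_le hfix (P := Ox ∪ Oy) (by
    rw [coe_union, hOx, hOy]
    exact Set.union_subset (horbit x hx) (horbit y hy))
  rw [sum_union hdisj] at hsum
  have := card_le_two_mul_sum_card_stabilizer_sub_one hOx fun w hw => hstab w (horbit x hx hw)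
  have := card_le_two_mul_sum_card_stabilizer_sub_one hOy fun w hw => hstab w (horbit y hy hw)
  have : 0 < Nat.card K := Nat.card_pos
  omega

end FixedPointCounting

theorem Subgroup.exists_forall_apply_eq_of_exists_fixing_apply_eq {α : Type*}
    (G : Subgroup (Perm α)) {m : ℕ}
    (hG : ∀ T : Finset α, #T < m → ∀ x ∉ T, ∀ y ∉ T,
      ∃ σ ∈ G, (∀ t ∈ T, σ t = t) ∧ σ x = y)
    (f g : Fin m ↪ α) : ∃ σ ∈ G, ∀ i, σ (f i) = g i := by
  induction m with
  | zero => exact ⟨1, G.one_mem, fun i => i.elim0⟩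
  | succ m ih =>
    obtain ⟨σ, hσG, hσ⟩ := ih (fun T hT => hG T (by omega))
      (Fin.castSuccEmb.trans f) (Fin.castSuccEmb.trans g)
    let T : Finset α := univ.map (Fin.castSuccEmb.trans g)
    have hx : σ (f (Fin.last m)) ∉ T := by
      simp only [T, Finset.mem_map, mem_univ, true_and, not_exists]
      intro i hi
      rw [← hσ i] at hi
      exact Fin.castSucc_ne_last i (f.injective (σ.injective hi))
    have hy : g (Fin.last m) ∉ T := by
      simp only [T, Finset.mem_map, mem_univ, true_and, not_exists]
      exact fun i hi => Fin.castSucc_ne_last i (g.injective hi)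
    obtain ⟨τ, hτG, hτT, hτ⟩ := hG T (by simp [T]) _ hx _ hy
    refine ⟨τ * σ, G.mul_mem hτG hσG, Fin.lastCases ?_ fun i => ?_⟩
    · exact hτ
    · simp only [Perm.mul_apply]
      rw [← Fin.castSuccEmb_apply, ← Function.Embedding.trans_apply, hσ]
      exact hτT _ (Finset.mem_map_of_mem _ (mem_univ i))

lemma isBase_univ_s2 {Ω : Type*} (G : Subgroup (Perm Ω)) : IsBase G Set.univ :=
  fun _ _ hg => Equiv.ext fun x => hg x trivial

lemma baseSize_le_ncard {Ω : Type*} {G : Subgroup (Perm Ω)} {B : Set Ω} (hB : IsBase G B) :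
    baseSize G ≤ B.ncard :=
  Nat.sInf_le ⟨B, hB, rfl⟩

namespace IsNComplete

variable {Ω : Type*} {G : Subgroup (Perm Ω)} {n : ℕ}

lemma exists_ne_one_forall_apply_eq (hG : IsNComplete G n) {S : Set Ω} (hS : S.ncard < n) :
    ∃ g ∈ G, (∀ s ∈ S, g s = s) ∧ g ≠ 1 := by
  have hS' : ¬ IsBase G S := fun hB => (baseSize_le_ncard hB).not_gt (hG.1 ▸ hS)
  simpa only [IsBase, not_forall, exists_prop] using hS'

lemma le_nat_card [Finite Ω] (hG : IsNComplete G n) : n ≤ Nat.card Ω := by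
  rw [← hG.1, ← Set.ncard_univ]
  exact baseSize_le_ncard (isBase_univ_s2 G)

theorem exists_fixing_apply_eq_of_ncard_eq [Finite Ω] (hG : IsNComplete G n) (hn : 2 ≤ n)
    {T : Set Ω} (hT : T.ncard = n - 2) {x y : Ω} (hx : x ∉ T) (hy : y ∉ T) :
    ∃ σ ∈ G, (∀ t ∈ T, σ t = t) ∧ σ x = y := by
  let K := G ⊓ fixingSubgroup (Perm Ω) T
  have hK {k : Perm Ω} : k ∈ K ↔ k ∈ G ∧ ∀ t ∈ T, k t = t := by
    simp [K, mem_fixingSubgroup_iff, Perm.smul_def]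
  have hinv : ∀ k : K, ∀ z ∈ Tᶜ, k • z ∈ Tᶜ := by
    intro k z hz hkz
    have hkkz : k.1 (k.1 z) = k.1 z := (hK.mp k.2).2 _ hkz
    exact hz (k.1.injective hkkz ▸ hkz)
  have hstab : ∀ z ∈ Tᶜ, stabilizer K z ≠ ⊥ := by
    intro z hz hbot
    obtain ⟨g, hg, hgfix, hg1⟩ := hG.exists_ne_one_forall_apply_eq (S := insert z T)
      (by rw [Set.ncard_insert_of_notMem hz, hT]; omega)
    have hgK : g ∈ K := hK.mpr ⟨hg, fun t ht => hgfix t (Set.mem_insert_of_mem z ht)⟩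
    have := (Subgroup.eq_bot_iff_forall _).mp hbot ⟨g, hgK⟩
      (hgfix z (Set.mem_insert z T))
    exact hg1 (congrArg Subtype.val this)
  have hfix : ∀ k : K, k ≠ 1 → (fixedBy Ω k ∩ Tᶜ).Subsingleton := by
    rintro k hk1 z ⟨hkz, hz⟩ w ⟨hkw, hw⟩
    by_contra hzw
    have hzwT : z ∉ insert w T := fun h => h.elim hzw hz
    refine hk1 (Subtype.ext (hG.2 (insert z (insert w T)) ?_ k (hK.mp k.2).1 ?_))
    · rw [Set.ncard_insert_of_notMem hzwT, Set.ncard_insert_of_notMem hw, hT]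
      omega
    · rintro t (rfl | rfl | ht)
      exacts [hkz, hkw, (hK.mp k.2).2 t ht]
  obtain ⟨k, hk⟩ := mem_orbit_of_fixedBy_inter_subsingleton hinv hstab hfix hx hy
  exact ⟨k, (hK.mp k.2).1, (hK.mp k.2).2, hk⟩

theorem exists_fixing_apply_eq [Finite Ω] (hG : IsNComplete G n) (hn : 2 ≤ n)
    {T : Set Ω} (hT : T.ncard ≤ n - 2) {x y : Ω} (hx : x ∉ T) (hy : y ∉ T) :
    ∃ σ ∈ G, (∀ t ∈ T, σ t = t) ∧ σ x = y := by
  have hTxy : T ⊆ {x, y}ᶜ := by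
    rintro t ht (rfl | rfl)
    exacts [hx ht, hy ht]
  have hxy : ({x, y} : Set Ω).ncard ≤ 2 := (Set.ncard_insert_le x {y}).trans (by simp)
  obtain ⟨T', hTT', hT'xy, hT'⟩ := Set.exists_subsuperset_card_eq hTxy hT
    (by rw [Set.ncard_compl]; have := hG.le_nat_card; omega)
  obtain ⟨σ, hσG, hσT', hσ⟩ := hG.exists_fixing_apply_eq_of_ncard_eq hn hT'
    (fun h => hT'xy h (Set.mem_insert x {y})) (fun h => hT'xy h (Set.mem_insert_of_mem x rfl))
  exact ⟨σ, hσG, fun t ht => hσT' t (hTT' ht), hσ⟩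

end IsNComplete

/-- If `G` is `n`-complete for some `n ≥ 2`, then `G` is `(n-1)`-transitive:
it is transitive on ordered tuples of `n - 1` pairwise distinct points. -/
theorem statement_2 {Ω : Type*} [Fintype Ω] (G : Subgroup (Equiv.Perm Ω))
    (n : ℕ) (hn : 2 ≤ n) (hG : IsNComplete G n) :
    ∀ f g : Fin (n - 1) ↪ Ω, ∃ σ ∈ G, ∀ i : Fin (n - 1), σ (f i) = g i :=
  G.exists_forall_apply_eq_of_exists_fixing_apply_eq fun T hT _ hx _ hy =>
    hG.exists_fixing_apply_eq hn (by rw [Set.ncard_coe_finset]; omega) hx hy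
end

section
/- Let Ω be a finite set and G ≤ Sym(Ω) a primitive permutation group with b(G) ≥ 2. Then the Saxl hypergraph Σ(G) is connected: for any two points of Ω there is a finite sequence of points starting at one and ending at the other in which any two consecutive points are neighbours in Σ(G). -/
/-- `E` is an edge of the Saxl hypergraph `Σ(G)`: a base for `G` of size
`b(G)`. -/
def IsSaxlEdge {Ω : Type*} (G : Subgroup (Equiv.Perm Ω)) (E : Set Ω) : Prop :=
  IsBase G E ∧ E.ncard = baseSize G

/-- `α` and `β` are neighbours in the Saxl hypergraph `Σ(G)`: they are
distinct and some edge of `Σ(G)` contains both. -/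
def SaxlAdj {Ω : Type*} (G : Subgroup (Equiv.Perm Ω)) (α β : Ω) : Prop :=
  α ≠ β ∧ ∃ E : Set Ω, IsSaxlEdge G E ∧ α ∈ E ∧ β ∈ E

/-- `G ≤ Sym(Ω)` is primitive: transitive, and every block (a set `B` with
`gB = B` or `gB ∩ B = ∅` for all `g ∈ G`) is trivial or all of `Ω`. -/
def IsPrimitivePerm {Ω : Type*} (G : Subgroup (Equiv.Perm Ω)) : Prop :=
  (∀ α β : Ω, ∃ g ∈ G, g α = β) ∧
  ∀ B : Set Ω, (∀ g ∈ G, ⇑g '' B = B ∨ Disjoint (⇑g '' B) B) →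
    B.Subsingleton ∨ B = Set.univ

/-!
Connectivity in `Σ(G)` is a `G`-invariant equivalence relation, so each of its classes is a
block of `G`; by primitivity a class is a single point or all of `Ω`. It cannot be a single
point: `G` is transitive, so every point lies in an image of a fixed edge, and that edge has
`b(G) ≥ 2` points.
-/

section Blocks

variable {Ω : Type*} {G : Subgroup (Equiv.Perm Ω)} {s : Ω → Ω → Prop}

theorem image_setOf_of_equivalence
    (hinv : ∀ g ∈ G, ∀ x y, s x y → s (g x) (g y)) {g : Equiv.Perm Ω} (hg : g ∈ G) (α : Ω) :
    ⇑g '' {z | s α z} = {z | s (g α) z} := by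
  ext z
  constructor
  · rintro ⟨w, hw, rfl⟩
    exact hinv g hg α w hw
  · intro hz
    refine ⟨g⁻¹ z, ?_, by simp⟩
    simpa using hinv g⁻¹ (G.inv_mem hg) _ _ hz

theorem isBlock_setOf_of_equivalence (hs : Equivalence s)
    (hinv : ∀ g ∈ G, ∀ x y, s x y → s (g x) (g y)) (α : Ω) :
    ∀ g ∈ G, ⇑g '' {z | s α z} = {z | s α z} ∨ Disjoint (⇑g '' {z | s α z}) {z | s α z} := by
  intro g hg
  rw [image_setOf_of_equivalence hinv hg]
  refine (em (Disjoint {z | s (g α) z} {z | s α z})).elim Or.inr fun hmeet => Or.inl ?_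
  obtain ⟨w, hgαw, hαw⟩ := Set.not_disjoint_iff.mp hmeet
  have hgαα : s (g α) α := hs.trans hgαw (hs.symm hαw)
  ext z
  exact ⟨hs.trans (hs.symm hgαα), hs.trans hgαα⟩

end Blocks

section Saxl

variable {Ω : Type*} {G : Subgroup (Equiv.Perm Ω)}

theorem IsBase.image {B : Set Ω} (hB : IsBase G B) {g : Equiv.Perm Ω} (hg : g ∈ G) :
    IsBase G (⇑g '' B) := by
  intro h hh hfix
  have hconj : g⁻¹ * h * g = 1 := by
    refine hB _ (G.mul_mem (G.mul_mem (G.inv_mem hg) hh) hg) fun b hb => ?_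
    simp [Equiv.Perm.mul_apply, hfix (g b) ⟨b, hb, rfl⟩]
  calc h = g * (g⁻¹ * h * g) * g⁻¹ := by group
    _ = 1 := by rw [hconj]; group

theorem IsSaxlEdge.image {E : Set Ω} (hE : IsSaxlEdge G E) {g : Equiv.Perm Ω} (hg : g ∈ G) :
    IsSaxlEdge G (⇑g '' E) :=
  ⟨hE.1.image hg, (Set.ncard_image_of_injective _ g.injective).trans hE.2⟩

theorem SaxlAdj.symm {α β : Ω} (h : SaxlAdj G α β) : SaxlAdj G β α :=
  let ⟨hne, E, hE, hα, hβ⟩ := h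
  ⟨hne.symm, E, hE, hβ, hα⟩

theorem SaxlAdj.apply {α β : Ω} (h : SaxlAdj G α β) {g : Equiv.Perm Ω} (hg : g ∈ G) :
    SaxlAdj G (g α) (g β) :=
  let ⟨hne, E, hE, hα, hβ⟩ := h
  ⟨g.injective.ne hne, ⇑g '' E, hE.image hg, ⟨α, hα, rfl⟩, ⟨β, hβ, rfl⟩⟩

theorem equivalence_reflTransGen_saxlAdj :
    Equivalence (Relation.ReflTransGen (SaxlAdj G)) :=
  haveI : Std.Symm (SaxlAdj G) := ⟨fun _ _ => SaxlAdj.symm⟩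
  ⟨fun _ => .refl, fun h => Std.Symm.symm _ _ h, .trans⟩

theorem reflTransGen_saxlAdj_apply :
    ∀ g ∈ G, ∀ x y, Relation.ReflTransGen (SaxlAdj G) x y →
      Relation.ReflTransGen (SaxlAdj G) (g x) (g y) :=
  fun g hg x y h =>
    Relation.ReflTransGen.lift (⇑g) (fun _ _ (hab : SaxlAdj G _ _) => hab.apply hg) x y h

theorem exists_isSaxlEdge [Finite Ω] : ∃ E : Set Ω, IsSaxlEdge G E := by
  have huniv : IsBase G Set.univ := fun g _ hfix => Equiv.ext fun x => hfix x trivial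
  exact Nat.sInf_mem (s := {n | ∃ B : Set Ω, IsBase G B ∧ B.ncard = n})
    ⟨_, Set.univ, huniv, rfl⟩

theorem exists_saxlAdj [Finite Ω] (htrans : ∀ α β : Ω, ∃ g ∈ G, g α = β)
    (hb : 2 ≤ baseSize G) (α : Ω) : ∃ β, SaxlAdj G α β := by
  obtain ⟨E₀, hE₀⟩ := exists_isSaxlEdge (G := G)
  obtain ⟨γ, hγ⟩ : E₀.Nonempty := Set.nonempty_of_ncard_ne_zero (by rw [hE₀.2]; omega)
  obtain ⟨g, hg, rfl⟩ := htrans γ α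
  have hE : IsSaxlEdge G (⇑g '' E₀) := hE₀.image hg
  obtain ⟨β, hβ, hne⟩ : ∃ β ∈ ⇑g '' E₀, β ≠ g γ :=
    Set.exists_ne_of_one_lt_ncard (by rw [hE.2]; omega) _
  exact ⟨β, hne.symm, _, hE, ⟨γ, hγ, rfl⟩, hβ⟩

end Saxl

/-- The Saxl hypergraph of a primitive group with `b(G) ≥ 2` is connected. -/
theorem statement_4 {Ω : Type*} [Fintype Ω] (G : Subgroup (Equiv.Perm Ω))
    (hprim : IsPrimitivePerm G) (hb : 2 ≤ baseSize G) :
    ∀ α β : Ω, Relation.ReflTransGen (SaxlAdj G) α β := by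
  intro α β
  have hblock := isBlock_setOf_of_equivalence (equivalence_reflTransGen_saxlAdj (G := G))
    reflTransGen_saxlAdj_apply α
  rcases hprim.2 _ hblock with hpoint | huniv
  · obtain ⟨γ, hγ⟩ := exists_saxlAdj hprim.1 hb α
    exact absurd (hpoint (.single hγ) .refl) hγ.1.symm
  · exact Set.eq_univ_iff_forall.mp huniv β
end

section
/- Let G ≤ Sym(Ω) be a permutation group with subgroups H, K ≤ G, let δ ∈ Ω, and let M_K ⊆ F_H ⊆ Ω \ {δ} and M_H ⊆ F_K ⊆ Ω \ {δ} be nonempty sets satisfying: (i) H fixes every point of F_H; (ii) K fixes every point of F_K; (iii) H leaves both M_H ∪ {δ} and F_K ∪ {δ} invariant and acts transitively on M_H ∪ {δ}; (iv) K leaves both M_K ∪ {δ} and F_H ∪ {δ} invariant and acts transitively on M_K ∪ {δ}. Then there exists a subgroup L ≤ G such that every element of L fixes each point of (F_H ∪ F_K ∪ {δ}) \ (M_H ∪ M_K ∪ {δ}), L leaves M_H ∪ M_K ∪ {δ} invariant, and the permutation group induced by L on M_H ∪ M_K ∪ {δ} is the full alternating group on that set. -/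
attribute [local instance] Classical.propDecidable

/-!
The witness is the commutator subgroup `L = ⁅H, K⁆`. A commutator `⁅h, k⁆` fixes a point `x`
as soon as `h` fixes both `x` and `k⁻¹ x`; since `K` permutes `F_H \ (M_K ∪ {δ})`, this shows
that `L` fixes `F_H \ M`, and symmetrically `F_K \ M`, where `M = M_H ∪ M_K ∪ {δ}`. On `M`,
`H` moves only `M_H ∪ {δ}` and `K` only `M_K ∪ {δ}`, so for `h δ = a ∈ M_H` and `k δ = b ∈ M_K`
the commutator `⁅h, k⁆` acts on `M` as the 3-cycle `(δ a b)`. These 3-cycles through `δ`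
generate the alternating group of `M`, while every commutator induces an even permutation of `M`.
-/

open Equiv MulAction Subgroup
open scoped Pointwise commutatorElement

section Action

variable {G α : Type*} [Group G] [MulAction G α]

theorem commutatorElement_mem_fixingSubgroup {F T : Set α} {h k : G}
    (hh : h ∈ fixingSubgroup G F) (hk : k ∈ stabilizer G T) (hTF : T ⊆ F) :
    ⁅h, k⁆ ∈ fixingSubgroup G T := by
  rw [mem_fixingSubgroup_iff] at hh ⊢
  intro x hx
  have hkx : k⁻¹ • x ∈ T := (mem_stabilizer_set.mp (inv_mem hk) x).mpr hx
  rw [commutatorElement_def, mul_smul, mul_smul, mul_smul,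
    inv_smul_eq_iff.mpr (hh _ (hTF hkx)).symm, smul_inv_smul, hh x (hTF hx)]

theorem stabilizer_inf_fixingSubgroup_le_stabilizer_union {s t : Set α} :
    stabilizer G s ⊓ fixingSubgroup G t ≤ stabilizer G (s ∪ t) :=
  (inf_le_inf_left _ (fixingSubgroup_le_stabilizer G t)).trans
    stabilizer_inf_stabilizer_le_stabilizer_union

theorem le_stabilizer_union_union_singleton {P Q : Set α} {δ : α} {H : Subgroup G}
    (hHP : H ≤ stabilizer G (P ∪ {δ})) (hHQ : H ≤ fixingSubgroup G Q) :
    H ≤ stabilizer G (P ∪ Q ∪ {δ}) := by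
  rw [Set.union_right_comm]
  exact (le_inf hHP hHQ).trans stabilizer_inf_fixingSubgroup_le_stabilizer_union

theorem commutator_le_fixingSubgroup_sdiff {F₁ F₂ M₁ M₂ : Set α} {δ : α} {H K : Subgroup G}
    (hH₁ : H ≤ fixingSubgroup G F₁) (hH₂ : H ≤ stabilizer G (F₂ ∪ {δ}))
    (hHM : H ≤ stabilizer G (M₁ ∪ {δ})) (hK₂ : K ≤ fixingSubgroup G F₂)
    (hK₁ : K ≤ stabilizer G (F₁ ∪ {δ})) (hKM : K ≤ stabilizer G (M₂ ∪ {δ})) :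
    ⁅H, K⁆ ≤ fixingSubgroup G ((F₁ ∪ F₂ ∪ {δ}) \ (M₁ ∪ M₂ ∪ {δ})) := by
  rw [commutator_le]
  intro h hh k hk
  have hT₁ : ⁅h, k⁆ ∈ fixingSubgroup G ((F₁ ∪ {δ}) \ (M₂ ∪ {δ})) :=
    commutatorElement_mem_fixingSubgroup (hH₁ hh)
      (stabilizer_inf_stabilizer_le_stabilizer_sdiff ⟨hK₁ hk, hKM hk⟩)
      fun _ hx => hx.1.resolve_right fun hδ => hx.2 (.inr hδ)
  have hT₂ : ⁅k, h⁆ ∈ fixingSubgroup G ((F₂ ∪ {δ}) \ (M₁ ∪ {δ})) :=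
    commutatorElement_mem_fixingSubgroup (hK₂ hk)
      (stabilizer_inf_stabilizer_le_stabilizer_sdiff ⟨hH₂ hh, hHM hh⟩)
      fun _ hx => hx.1.resolve_right fun hδ => hx.2 (.inr hδ)
  rw [← commutatorElement_inv, inv_mem_iff] at hT₂
  have hT : ⁅h, k⁆ ∈ fixingSubgroup G ((F₁ ∪ {δ}) \ (M₂ ∪ {δ}) ∪ (F₂ ∪ {δ}) \ (M₁ ∪ {δ})) := by
    rw [fixingSubgroup_union]
    exact ⟨hT₁, hT₂⟩
  refine fixingSubgroup_antitone G α (fun x => ?_) hT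
  simp only [Set.mem_union, Set.mem_sdiff, Set.mem_singleton_iff]
  tauto

end Action

namespace Equiv.Perm

variable {α : Type*}

def stabilizerSubtypePerm (s : Set α) : stabilizer (Perm α) s →* Perm s where
  toFun g := (g : Perm α).subtypePerm (mem_stabilizer_set.mp g.2)
  map_one' := rfl
  map_mul' _ _ := rfl

def inducedSubgroup (L : Subgroup (Perm α)) (s : Set α) : Subgroup (Perm s) :=
  (L.subgroupOf (stabilizer (Perm α) s)).map (stabilizerSubtypePerm s)

theorem mem_inducedSubgroup {L : Subgroup (Perm α)} {s : Set α} {σ : Perm s} :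
    σ ∈ inducedSubgroup L s ↔ ∃ l, ∃ _ : l ∈ L, ∃ hl : ∀ x, x ∈ s ↔ l x ∈ s,
      σ = l.subtypePerm (fun x => (hl x).symm) := by
  constructor
  · rintro ⟨g, hg, rfl⟩
    exact ⟨g, hg, fun x => (mem_stabilizer_set.mp g.2 x).symm, rfl⟩
  · rintro ⟨l, hl, hls, rfl⟩
    exact ⟨⟨l, mem_stabilizer_set.mpr fun x => (hls x).symm⟩, hl, rfl⟩

theorem inv_apply_mem_of_mem_stabilizer_union_singleton {g : Perm α} {S : Set α} {δ y : α}
    (hg : g ∈ stabilizer (Perm α) (S ∪ {δ})) (hy : y ∈ S ∪ {δ}) (hyδ : y ≠ g δ) : g⁻¹ y ∈ S :=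
  ((mem_stabilizer_set.mp (inv_mem hg) y).mpr hy).resolve_right fun e =>
    hyδ (by simp [← Set.mem_singleton_iff.mp e])

section Swaps

variable [DecidableEq α]

section SwapsThroughPoint

variable {S : Subgroup (Perm α)} {δ : α}

theorem swap_mul_swap_same_mem (hS : ∀ x y, x ≠ δ → y ≠ δ → swap δ x * swap δ y ∈ S)
    {a b c : α} (hab : a ≠ b) (hac : a ≠ c) : swap a b * swap a c ∈ S := by
  have conj : ∀ {x}, a ≠ δ → x ≠ δ → a ≠ x → swap a x = swap δ a * swap δ x * swap δ a :=
    fun {x} ha hx hax => by rw [swap_comm δ x, swap_mul_swap_mul_swap hx hax.symm]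
  rcases eq_or_ne a δ with rfl | ha
  · exact hS b c hab.symm hac.symm
  rcases eq_or_ne b δ with rfl | hb
  · rcases eq_or_ne c b with rfl | hc
    · simp
    rw [conj ha hc hac, swap_comm a b]
    simpa [mul_assoc] using hS c a hc ha
  rcases eq_or_ne c δ with rfl | hc
  · rw [conj ha hb hab, swap_comm a c]
    simpa [mul_assoc] using hS a b ha hb
  rw [conj ha hb hab, conj ha hc hac]
  simpa [mul_assoc] using mul_mem (hS a b ha hb) (hS c a hc ha)

theorem alternatingGroup_le_of_swap_mul_swap_mem [Fintype α]
    (hS : ∀ x y, x ≠ δ → y ≠ δ → swap δ x * swap δ y ∈ S) : alternatingGroup α ≤ S := by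
  rw [← closure_three_cycles_eq_alternating, closure_le]
  intro σ hσ
  obtain ⟨a, ha⟩ := Finset.card_pos.mp (hσ.card_support.symm ▸ three_pos : 0 < σ.support.card)
  have hnodup := hσ.nodup_iff_mem_support.mpr ha
  rw [SetLike.mem_coe, hσ.eq_swap_mul_swap_iff_mem_support.mpr ha, swap_comm]
  simp only [List.nodup_cons, List.mem_cons, not_or] at hnodup
  exact swap_mul_swap_same_mem hS (Ne.symm hnodup.1.1) hnodup.2.1.1

theorem swap_mul_swap_mem_of_covering {A B : Set α} (hA : A.Nonempty) (hB : B.Nonempty)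
    (hcover : ∀ x ≠ δ, x ∈ A ∨ x ∈ B) (hAB : ∀ a ∈ A, ∀ b ∈ B, swap δ a * swap δ b ∈ S)
    (x y : α) (hx : x ≠ δ) (hy : y ≠ δ) : swap δ x * swap δ y ∈ S := by
  have hBA : ∀ b ∈ B, ∀ a ∈ A, swap δ b * swap δ a ∈ S := fun b hb a ha => by
    simpa using S.inv_mem (hAB a ha b hb)
  have via : ∀ z, swap δ x * swap δ y = swap δ x * swap δ z * (swap δ z * swap δ y) := fun z => by
    simp [mul_assoc]
  obtain ⟨a₀, ha₀⟩ := hA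
  obtain ⟨b₀, hb₀⟩ := hB
  rcases hcover x hx with hxA | hxB <;> rcases hcover y hy with hyA | hyB
  · rw [via b₀]; exact mul_mem (hAB x hxA b₀ hb₀) (hBA b₀ hb₀ y hyA)
  · exact hAB x hxA y hyB
  · exact hBA x hxB y hyA
  · rw [via a₀]; exact mul_mem (hBA x hxB a₀ ha₀) (hAB a₀ ha₀ y hyB)

end SwapsThroughPoint

theorem commutatorElement_apply_eq_swap_mul_swap {P Q : Set α} {δ : α} {h k : Perm α}
    (hδP : δ ∉ P) (hδQ : δ ∉ Q)
    (hhP : h ∈ stabilizer (Perm α) (P ∪ {δ})) (hhQ : h ∈ fixingSubgroup (Perm α) Q)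
    (hkQ : k ∈ stabilizer (Perm α) (Q ∪ {δ})) (hkP : k ∈ fixingSubgroup (Perm α) P)
    (hhδ : h δ ∈ P) (hkδ : k δ ∈ Q) {x : α} (hx : x ∈ P ∪ Q ∪ {δ}) :
    ⁅h, k⁆ x = (swap δ (k δ) * swap δ (h δ)) x := by
  have hQ : ∀ y ∈ Q, h y = y := (mem_fixingSubgroup_iff _).mp hhQ
  have hP : ∀ y ∈ P, k y = y := (mem_fixingSubgroup_iff _).mp hkP
  have hQ' : ∀ y ∈ Q, h⁻¹ y = y := (mem_fixingSubgroup_iff _).mp (inv_mem hhQ)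
  have hP' : ∀ y ∈ P, k⁻¹ y = y := (mem_fixingSubgroup_iff _).mp (inv_mem hkP)
  have ha : h δ ≠ δ := fun e => hδP (e ▸ hhδ)
  have hb : k δ ≠ δ := fun e => hδQ (e ▸ hkδ)
  have hPb : ∀ y ∈ P, y ≠ k δ := fun y hy e => hb (k.injective (e ▸ hP y hy).symm).symm
  have hQa : ∀ y ∈ Q, y ≠ h δ := fun y hy e => ha (h.injective (e ▸ hQ y hy).symm).symm
  rw [commutatorElement_def, mul_apply, mul_apply, mul_apply, mul_apply]
  rcases hx with (hxP | hxQ) | hxδ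
  · have hxδ : x ≠ δ := fun e => hδP (e ▸ hxP)
    rcases eq_or_ne x (h δ) with rfl | hxa
    · rw [hP' _ hxP]
      simp [hQ _ hkδ]
    · rw [hP' x hxP, hP _ (inv_apply_mem_of_mem_stabilizer_union_singleton hhP (.inl hxP) hxa),
        swap_apply_of_ne_of_ne hxδ hxa, swap_apply_of_ne_of_ne hxδ (hPb x hxP)]
      simp
  · have hxδ : x ≠ δ := fun e => hδQ (e ▸ hxQ)
    rcases eq_or_ne x (k δ) with rfl | hxb
    · rw [show k⁻¹ (k δ) = δ by simp,
        hP _ (inv_apply_mem_of_mem_stabilizer_union_singleton hhP (.inr rfl) ha.symm),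
        swap_apply_of_ne_of_ne hb (hQa _ hkδ)]
      simp
    · rw [hQ' _ (inv_apply_mem_of_mem_stabilizer_union_singleton hkQ (.inl hxQ) hxb),
        swap_apply_of_ne_of_ne hxδ (hQa x hxQ), swap_apply_of_ne_of_ne hxδ hxb]
      simp [hQ x hxQ]
  · rw [Set.mem_singleton_iff.mp hxδ,
      hQ' _ (inv_apply_mem_of_mem_stabilizer_union_singleton hkQ (.inr rfl) hb.symm)]
    simp [swap_apply_of_ne_of_ne ha (hPb _ hhδ)]

theorem inducedSubgroup_commutator_le_alternatingGroup {s : Set α} [Fintype s]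
    {H K : Subgroup (Perm α)} (hH : H ≤ stabilizer (Perm α) s) (hK : K ≤ stabilizer (Perm α) s) :
    inducedSubgroup ⁅H, K⁆ s ≤ alternatingGroup s := by
  rintro _ ⟨g, hg, rfl⟩
  have hHK : ⁅H, K⁆ ≤ ((alternatingGroup s).comap (stabilizerSubtypePerm s)).map
      (stabilizer (Perm α) s).subtype := by
    rw [commutator_le]
    intro h hh k hk
    refine ⟨⁅(⟨h, hH hh⟩ : stabilizer (Perm α) s), ⟨k, hK hk⟩⁆, ?_, rfl⟩
    simp [mem_alternatingGroup, map_commutatorElement, commutatorElement_eq_one_iff_commute,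
      Commute.all]
  obtain ⟨g', hg', hgg'⟩ := hHK hg
  rwa [Subtype.ext hgg'] at hg'

theorem inducedSubgroup_commutator_eq_alternatingGroup {P Q : Set α} {δ : α}
    [Fintype ↥(P ∪ Q ∪ {δ})] {H K : Subgroup (Perm α)} (hδP : δ ∉ P) (hδQ : δ ∉ Q)
    (hP : P.Nonempty) (hQ : Q.Nonempty)
    (hHP : H ≤ stabilizer (Perm α) (P ∪ {δ})) (hHQ : H ≤ fixingSubgroup (Perm α) Q)
    (hKQ : K ≤ stabilizer (Perm α) (Q ∪ {δ})) (hKP : K ≤ fixingSubgroup (Perm α) P)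
    (hHδ : ∀ x ∈ P, ∃ h ∈ H, h δ = x) (hKδ : ∀ y ∈ Q, ∃ k ∈ K, k δ = y) :
    inducedSubgroup ⁅H, K⁆ (P ∪ Q ∪ {δ}) = alternatingGroup ↥(P ∪ Q ∪ {δ}) := by
  have hH : H ≤ stabilizer (Perm α) (P ∪ Q ∪ {δ}) := le_stabilizer_union_union_singleton hHP hHQ
  have hK : K ≤ stabilizer (Perm α) (P ∪ Q ∪ {δ}) := by
    rw [Set.union_comm P Q]
    exact le_stabilizer_union_union_singleton hKQ hKP
  refine le_antisymm (inducedSubgroup_commutator_le_alternatingGroup hH hK) ?_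
  refine alternatingGroup_le_of_swap_mul_swap_mem (δ := (⟨δ, .inr rfl⟩ : ↥(P ∪ Q ∪ {δ})))
    (swap_mul_swap_mem_of_covering (A := {y | (y : α) ∈ Q}) (B := {x | (x : α) ∈ P})
      ?_ ?_ ?_ ?_)
  · obtain ⟨y, hy⟩ := hQ
    exact ⟨⟨y, .inl (.inr hy)⟩, hy⟩
  · obtain ⟨x, hx⟩ := hP
    exact ⟨⟨x, .inl (.inl hx)⟩, hx⟩
  · rintro ⟨x, (hx | hx) | hx⟩ hxδ
    · exact .inr hx
    · exact .inl hx
    · exact absurd (Subtype.ext (Set.mem_singleton_iff.mp hx)) hxδ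
  · rintro ⟨y, -⟩ (hy : y ∈ Q) ⟨x, -⟩ (hx : x ∈ P)
    obtain ⟨h, hh, rfl⟩ := hHδ x hx
    obtain ⟨k, hk, rfl⟩ := hKδ y hy
    have hhk : ⁅h, k⁆ ∈ stabilizer (Perm α) (P ∪ Q ∪ {δ}) :=
      (commutator_mono hH hK).trans (commutator_le_self _) (commutator_mem_commutator hh hk)
    refine mem_inducedSubgroup.mpr ⟨⁅h, k⁆, commutator_mem_commutator hh hk,
      fun z => (mem_stabilizer_set.mp hhk z).symm, ?_⟩
    ext ⟨z, hz⟩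
    simp [commutatorElement_apply_eq_swap_mul_swap hδP hδQ (hHP hh) (hHQ hh) (hKQ hk) (hKP hk)
      hx hy hz, Subtype.coe_injective.map_swap]

end Swaps

end Equiv.Perm

theorem statement_5_general {Ω : Type*} [Fintype Ω] [DecidableEq Ω]
    (G H K : Subgroup (Equiv.Perm Ω)) (hH : H ≤ G) (hK : K ≤ G) (δ : Ω)
    (MK FH MH FK : Set Ω)
    (hMKFH : MK ⊆ FH) (hFHδ : FH ⊆ {δ}ᶜ) (hMHFK : MH ⊆ FK) (hFKδ : FK ⊆ {δ}ᶜ)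
    (hMKne : MK.Nonempty) (hMHne : MH.Nonempty)
    -- (i) `H` fixes every point of `F_H`
    (h1 : ∀ h ∈ H, ∀ x ∈ FH, h x = x)
    -- (ii) `K` fixes every point of `F_K`
    (h2 : ∀ k ∈ K, ∀ x ∈ FK, k x = x)
    -- (iii) `H` leaves `M_H ∪ {δ}` and `F_K ∪ {δ}` invariant, and acts
    -- transitively on `M_H ∪ {δ}`
    (h3 : ∀ h ∈ H, ⇑h '' (MH ∪ {δ}) = MH ∪ {δ})
    (h3' : ∀ h ∈ H, ⇑h '' (FK ∪ {δ}) = FK ∪ {δ})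
    (h3'' : ∀ x ∈ MH ∪ {δ}, ∀ y ∈ MH ∪ {δ}, ∃ h ∈ H, h x = y)
    -- (iv) `K` leaves `M_K ∪ {δ}` and `F_H ∪ {δ}` invariant, and acts
    -- transitively on `M_K ∪ {δ}`
    (h4 : ∀ k ∈ K, ⇑k '' (MK ∪ {δ}) = MK ∪ {δ})
    (h4' : ∀ k ∈ K, ⇑k '' (FH ∪ {δ}) = FH ∪ {δ})
    (h4'' : ∀ x ∈ MK ∪ {δ}, ∀ y ∈ MK ∪ {δ}, ∃ k ∈ K, k x = y) :
    ∃ L : Subgroup (Equiv.Perm Ω), L ≤ G ∧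
      -- every element of `L` fixes each point of
      -- `(F_H ∪ F_K ∪ {δ}) \ (M_H ∪ M_K ∪ {δ})`
      (∀ l ∈ L, ∀ x ∈ (FH ∪ FK ∪ {δ}) \ (MH ∪ MK ∪ {δ}), l x = x) ∧
      -- `L` leaves `M_H ∪ M_K ∪ {δ}` invariant
      (∀ l ∈ L, ⇑l '' (MH ∪ MK ∪ {δ}) = MH ∪ MK ∪ {δ}) ∧
      -- the permutation group induced by `L` on `M_H ∪ M_K ∪ {δ}` is the
      -- full alternating group on that set
      (∀ σ : Equiv.Perm ↥(MH ∪ MK ∪ {δ} : Set Ω),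
        σ ∈ alternatingGroup ↥(MH ∪ MK ∪ {δ} : Set Ω) ↔
          ∃ l, ∃ _ : l ∈ L,
            ∃ hl : ∀ x, x ∈ (MH ∪ MK ∪ {δ} : Set Ω) ↔ l x ∈ (MH ∪ MK ∪ {δ} : Set Ω),
              σ = Equiv.Perm.subtypePerm l (fun x => (hl x).symm)) := by
  have hδMH : δ ∉ MH := fun hδ => hFKδ (hMHFK hδ) rfl
  have hδMK : δ ∉ MK := fun hδ => hFHδ (hMKFH hδ) rfl
  have hHFH : H ≤ fixingSubgroup (Perm Ω) FH := fun h hh =>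
    (mem_fixingSubgroup_iff _).mpr (h1 h hh)
  have hKFK : K ≤ fixingSubgroup (Perm Ω) FK := fun k hk =>
    (mem_fixingSubgroup_iff _).mpr (h2 k hk)
  have hHMK := hHFH.trans (fixingSubgroup_antitone _ _ hMKFH)
  have hKMH := hKFK.trans (fixingSubgroup_antitone _ _ hMHFK)
  have hHM : H ≤ stabilizer (Perm Ω) (MH ∪ MK ∪ {δ}) := le_stabilizer_union_union_singleton h3 hHMK
  have hKM : K ≤ stabilizer (Perm Ω) (MH ∪ MK ∪ {δ}) := by
    rw [Set.union_comm MH MK]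
    exact le_stabilizer_union_union_singleton h4 hKMH
  refine ⟨⁅H, K⁆, (commutator_mono hH hK).trans G.commutator_le_self,
    fun l hl => (mem_fixingSubgroup_iff _).mp
      (commutator_le_fixingSubgroup_sdiff hHFH h3' h3 hKFK h4' h4 hl),
    fun l hl => (commutator_mono hHM hKM).trans (commutator_le_self _) hl, fun σ => ?_⟩
  rw [← Perm.mem_inducedSubgroup, Perm.inducedSubgroup_commutator_eq_alternatingGroup hδMH hδMK
    hMHne hMKne h3 hHMK h4 hKMH (fun x hx => h3'' δ (.inr rfl) x (.inl hx))
    (fun y hy => h4'' δ (.inr rfl) y (.inl hy))]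

theorem statement_5 {Ω : Type*} [Fintype Ω] [DecidableEq Ω]
    (G H K : Subgroup (Equiv.Perm Ω)) (hH : H ≤ G) (hK : K ≤ G) (δ : Ω)
    (MK FH MH FK : Set Ω)
    (hMKFH : MK ⊆ FH) (hFHδ : FH ⊆ {δ}ᶜ) (hMHFK : MH ⊆ FK) (hFKδ : FK ⊆ {δ}ᶜ)
    (hMKne : MK.Nonempty) (hFHne : FH.Nonempty) (hMHne : MH.Nonempty) (hFKne : FK.Nonempty)
    -- (i) `H` fixes every point of `F_H`
    (h1 : ∀ h ∈ H, ∀ x ∈ FH, h x = x)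
    -- (ii) `K` fixes every point of `F_K`
    (h2 : ∀ k ∈ K, ∀ x ∈ FK, k x = x)
    -- (iii) `H` leaves `M_H ∪ {δ}` and `F_K ∪ {δ}` invariant, and acts
    -- transitively on `M_H ∪ {δ}`
    (h3 : ∀ h ∈ H, ⇑h '' (MH ∪ {δ}) = MH ∪ {δ})
    (h3' : ∀ h ∈ H, ⇑h '' (FK ∪ {δ}) = FK ∪ {δ})
    (h3'' : ∀ x ∈ MH ∪ {δ}, ∀ y ∈ MH ∪ {δ}, ∃ h ∈ H, h x = y)
    -- (iv) `K` leaves `M_K ∪ {δ}` and `F_H ∪ {δ}` invariant, and acts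
    -- transitively on `M_K ∪ {δ}`
    (h4 : ∀ k ∈ K, ⇑k '' (MK ∪ {δ}) = MK ∪ {δ})
    (h4' : ∀ k ∈ K, ⇑k '' (FH ∪ {δ}) = FH ∪ {δ})
    (h4'' : ∀ x ∈ MK ∪ {δ}, ∀ y ∈ MK ∪ {δ}, ∃ k ∈ K, k x = y) :
    ∃ L : Subgroup (Equiv.Perm Ω), L ≤ G ∧
      -- every element of `L` fixes each point of
      -- `(F_H ∪ F_K ∪ {δ}) \ (M_H ∪ M_K ∪ {δ})`
      (∀ l ∈ L, ∀ x ∈ (FH ∪ FK ∪ {δ}) \ (MH ∪ MK ∪ {δ}), l x = x) ∧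
      -- `L` leaves `M_H ∪ M_K ∪ {δ}` invariant
      (∀ l ∈ L, ⇑l '' (MH ∪ MK ∪ {δ}) = MH ∪ MK ∪ {δ}) ∧
      -- the permutation group induced by `L` on `M_H ∪ M_K ∪ {δ}` is the
      -- full alternating group on that set
      (∀ σ : Equiv.Perm ↥(MH ∪ MK ∪ {δ} : Set Ω),
        σ ∈ alternatingGroup ↥(MH ∪ MK ∪ {δ} : Set Ω) ↔
          ∃ l, ∃ _ : l ∈ L,
            ∃ hl : ∀ x, x ∈ (MH ∪ MK ∪ {δ} : Set Ω) ↔ l x ∈ (MH ∪ MK ∪ {δ} : Set Ω),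
              σ = Equiv.Perm.subtypePerm l (fun x => (hl x).symm)) :=
  statement_5_general G H K hH hK δ MK FH MH FK hMKFH hFHδ hMHFK hFKδ hMKne hMHne h1 h2 h3 h3' h3''
    h4 h4' h4''
end

section
/- Let Ω be a finite set and G ≤ Sym(Ω) a permutation group with b(G) ≥ 3. Then no two distinct points α, β ∈ Ω have exactly one common neighbour in the Saxl hypergraph Σ(G); in particular, the second gossip number of Σ(G) satisfies g_2 ≠ 1. -/
/-- The `n`-th gossip number of the Saxl hypergraph `Σ(G)`: for
`1 ≤ n ≤ |Ω|`, the minimum over `n`-element subsets `S ⊆ Ω` of the number of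
points adjacent in `Σ(G)` to every point of `S`; otherwise `0`. -/
noncomputable def saxlGossip {Ω : Type*} (G : Subgroup (Equiv.Perm Ω)) (n : ℕ) : ℕ :=
  if 1 ≤ n ∧ n ≤ Nat.card Ω then
    sInf {m | ∃ S : Set Ω, S.ncard = n ∧ m = {γ | ∀ s ∈ S, SaxlAdj G γ s}.ncard}
  else 0

/-- Edges of the Saxl hypergraph are preserved by elements of `G`. -/
lemma isSaxlEdge_image {Ω : Type*} {G : Subgroup (Equiv.Perm Ω)} {g : Equiv.Perm Ω}
    (hg : g ∈ G) {E : Set Ω} (hE : IsSaxlEdge G E) : IsSaxlEdge G ((g : Ω → Ω) '' E) := by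
  constructor
  · intro h hh hfix
    have hconj : g⁻¹ * h * g = 1 := by
      apply hE.1 (g⁻¹ * h * g) (mul_mem (mul_mem (inv_mem hg) hh) hg)
      intro b hb
      have : h (g b) = g b := hfix (g b) ⟨b, hb, rfl⟩
      simp [Equiv.Perm.mul_apply, this]
    calc h = g * (g⁻¹ * h * g) * g⁻¹ := by group
    _ = 1 := by rw [hconj]; group
  · rw [Set.ncard_image_of_injective _ g.injective]; exact hE.2

theorem statement_9 {Ω : Type*} [Fintype Ω] (G : Subgroup (Equiv.Perm Ω))
    (hb : 3 ≤ baseSize G) :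
    (∀ α β : Ω, α ≠ β → {γ | SaxlAdj G γ α ∧ SaxlAdj G γ β}.ncard ≠ 1) ∧
    saxlGossip G 2 ≠ 1 := by
  have main : ∀ α β : Ω, α ≠ β → {γ | SaxlAdj G γ α ∧ SaxlAdj G γ β}.ncard ≠ 1 := by
    intro α β hαβ hone
    obtain ⟨γ, hγ⟩ := Set.ncard_eq_one.1 hone
    have hγmem : γ ∈ {γ | SaxlAdj G γ α ∧ SaxlAdj G γ β} := by rw [hγ]; rfl
    obtain ⟨hγα, hγβ⟩ := hγmem
    have huniq : ∀ δ : Ω, SaxlAdj G δ α → SaxlAdj G δ β → δ = γ := by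
      intro δ h1 h2
      have : δ ∈ {γ | SaxlAdj G γ α ∧ SaxlAdj G γ β} := ⟨h1, h2⟩
      rw [hγ] at this; exact this
    obtain ⟨hγα', E, hE, hγE, hαE⟩ := hγα
    obtain ⟨hγβ', F, hF, hγF, hβF⟩ := hγβ
    -- any element of G fixing α and β fixes γ
    have hfixγ : ∀ g : Equiv.Perm Ω, g ∈ G → g α = α → g β = β → g γ = γ := by
      intro g hg hgα hgβ
      apply huniq
      · refine ⟨fun h => hγα' (g.injective (by rw [h, hgα])), (g : Ω → Ω) '' E,
          isSaxlEdge_image hg hE, ⟨γ, hγE, rfl⟩, ⟨α, hαE, hgα⟩⟩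
      · refine ⟨fun h => hγβ' (g.injective (by rw [h, hgβ])), (g : Ω → Ω) '' F,
          isSaxlEdge_image hg hF, ⟨γ, hγF, rfl⟩, ⟨β, hβF, hgβ⟩⟩
    have hαmem : α ∈ E \ {γ} := ⟨hαE, fun h => hγα' (by simpa using h.symm)⟩
    -- the modified set is a base
    set E' : Set Ω := insert β (E \ {γ}) with hE'def
    have hbase' : IsBase G E' := by
      intro g hg hfix
      have hα : g α = α := hfix α (Set.mem_insert_of_mem _ hαmem)
      have hβ : g β = β := hfix β (Set.mem_insert _ _)
      have hγfix : g γ = γ := hfixγ g hg hα hβ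
      apply hE.1 g hg
      intro b hb
      by_cases hbγ : b = γ
      · rw [hbγ]; exact hγfix
      · exact hfix b (Set.mem_insert_of_mem _ ⟨hb, hbγ⟩)
    have hle : baseSize G ≤ E'.ncard := Nat.sInf_le ⟨E', hbase', rfl⟩
    have hdiffcard : (E \ {γ}).ncard = E.ncard - 1 := Set.ncard_diff_singleton_of_mem hγE
    have hβE : β ∉ E \ {γ} := by
      intro h
      have : E' = E \ {γ} := Set.insert_eq_self.2 h
      rw [this, hdiffcard, hE.2] at hle
      omega
    have hcard' : E'.ncard = baseSize G := by
      rw [hE'def, Set.ncard_insert_of_notMem hβE, hdiffcard, hE.2]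
      omega
    have hedge' : IsSaxlEdge G E' := ⟨hbase', hcard'⟩
    -- find a third point of E'
    have hne : (E' \ {α, β}).Nonempty := by
      rw [Set.nonempty_iff_ne_empty]
      intro h
      have hsub : E' ⊆ {α, β} := Set.diff_eq_empty.1 h
      have h1 := Set.ncard_le_ncard hsub (Set.toFinite _)
      have h2 : ({α, β} : Set Ω).ncard ≤ 2 :=
        (Set.ncard_insert_le _ _).trans (by simp)
      omega
    obtain ⟨δ, hδE', hδ⟩ := hne
    simp only [Set.mem_insert_iff, Set.mem_singleton_iff, not_or] at hδ
    have hαE' : α ∈ E' := Set.mem_insert_of_mem _ hαmem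
    have hβE' : β ∈ E' := Set.mem_insert _ _
    have hδγ : δ = γ := huniq δ ⟨hδ.1, E', hedge', hδE', hαE'⟩ ⟨hδ.2, E', hedge', hδE', hβE'⟩
    rw [hδγ] at hδE'
    rcases hδE' with h | h
    · exact hγβ' h
    · exact h.2 rfl
  refine ⟨main, ?_⟩
  -- |Ω| ≥ 3
  have hcardΩ : 3 ≤ Nat.card Ω := by
    have huniv : IsBase G (Set.univ : Set Ω) := by
      intro g hg hfix
      ext x
      simp [hfix x (Set.mem_univ x)]
    have hmem : (Set.univ : Set Ω).ncard ∈ {n | ∃ B : Set Ω, IsBase G B ∧ B.ncard = n} :=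
      ⟨Set.univ, huniv, rfl⟩
    have := Nat.sInf_le hmem
    rw [Set.ncard_univ] at this
    rw [baseSize] at hb
    omega
  intro hg1
  rw [saxlGossip, if_pos ⟨by norm_num, by omega⟩] at hg1
  set X := {m | ∃ S : Set Ω, S.ncard = 2 ∧ m = {γ | ∀ s ∈ S, SaxlAdj G γ s}.ncard} with hX
  have hXne : X.Nonempty := by
    rw [Set.nonempty_iff_ne_empty]
    intro h
    rw [h] at hg1
    simp [Nat.sInf_empty] at hg1
  have hmem : (1 : ℕ) ∈ X := hg1 ▸ Nat.sInf_mem hXne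
  obtain ⟨S, hS2, hS1⟩ := hmem
  obtain ⟨α, β, hαβ, rfl⟩ := Set.ncard_eq_two.1 hS2
  apply main α β hαβ
  rw [← hS1.symm]
  congr 1
  ext δ
  simp [and_comm]
end

section
/- Let S and E be finite sets, and for each e ∈ E let A_e ⊆ S; for T ⊆ E write S_T = {s ∈ S : s ∈ A_e for all e ∈ T} (so S_∅ = S). Let k and n be natural numbers with n ≥ 1 and let X be a set of subsets of E. If for every T ⊆ E we have |S_T| ≡ k + n·[T ∈ X] (mod 2n), then the number of elements of S lying in no A_e (e ∈ E) is congruent to k·[E = ∅] + n·[|X| is odd] modulo 2n. In particular, if X = ∅, this number is congruent to k mod 2n if E = ∅ and to 0 mod 2n otherwise. -/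
open Finset in
lemma aux_pow_sum {ι : Type*} [DecidableEq ι] (m : ℕ) (F : Finset ι) :
    (∑ T ∈ F.powerset, (-1 : ZMod m) ^ T.card) = if F = ∅ then 1 else 0 := by
  have := Finset.sum_powerset_neg_one_pow_card (x := F)
  calc (∑ T ∈ F.powerset, (-1 : ZMod m) ^ T.card)
      = ((∑ T ∈ F.powerset, (-1 : ℤ) ^ T.card : ℤ) : ZMod m) := by push_cast; ring
    _ = _ := by rw [this]; split <;> simp



open Classical in
theorem statement_15 {α ι : Type*} [DecidableEq α] [DecidableEq ι]
    (S : Finset α) (E : Finset ι) (A : ι → Finset α) (hA : ∀ e ∈ E, A e ⊆ S)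
    (k n : ℕ) (hn : 1 ≤ n) (X : Finset (Finset ι)) (hX : ∀ T ∈ X, T ⊆ E)
    -- for every `T ⊆ E`, `|S_T| ≡ k + n·[T ∈ X] (mod 2n)`
    (h : ∀ T ⊆ E, (S.filter fun s => ∀ e ∈ T, s ∈ A e).card ≡
      k + n * (if T ∈ X then 1 else 0) [MOD 2 * n]) :
    -- the number of elements of `S` lying in no `A_e` is congruent to
    -- `k·[E = ∅] + n·[|X| odd]` modulo `2n`
    (S.filter fun s => ∀ e ∈ E, s ∉ A e).card ≡
      k * (if E = ∅ then 1 else 0) + n * (if Odd X.card then 1 else 0) [MOD 2 * n] := by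
  rw [← ZMod.natCast_eq_natCast_iff]
  set m := 2 * n with hm
  have hn0 : (2 * n : ZMod m) = 0 := by
    rw [hm]; exact_mod_cast ZMod.natCast_self (2*n)
  -- inclusion-exclusion
  have key : ((S.filter fun s => ∀ e ∈ E, s ∉ A e).card : ZMod m) =
      ∑ T ∈ E.powerset, (-1)^T.card * ((S.filter fun s => ∀ e ∈ T, s ∈ A e).card : ZMod m) := by
    simp_rw [Finset.card_filter, Nat.cast_sum, Finset.mul_sum, Nat.cast_ite, Nat.cast_one,
      Nat.cast_zero]
    rw [Finset.sum_comm]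
    refine Finset.sum_congr rfl fun s _ => ?_
    have hsplit : ∀ T ∈ E.powerset, ((-1 : ZMod m)^T.card * if ∀ e ∈ T, s ∈ A e then 1 else 0)
        = if T ∈ (E.filter fun e => s ∈ A e).powerset then (-1 : ZMod m)^T.card else 0 := by
      intro T hT
      simp only [Finset.mem_powerset] at hT ⊢
      by_cases hc : ∀ e ∈ T, s ∈ A e
      · rw [if_pos hc, if_pos, mul_one]
        intro e he; exact Finset.mem_filter.2 ⟨hT he, hc e he⟩
      · rw [if_neg hc, if_neg, mul_zero]
        intro hsub; exact hc fun e he => (Finset.mem_filter.1 (hsub he)).2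
    rw [Finset.sum_congr rfl hsplit, Finset.sum_ite_mem,
      Finset.inter_eq_right.2 (Finset.powerset_mono.2 (Finset.filter_subset _ _)),
      aux_pow_sum]
    congr 1
    simp [Finset.filter_eq_empty_iff]
  rw [key]
  -- replace each card with its residue
  have hrepl : ∀ T ∈ E.powerset, ((-1 : ZMod m)^T.card *
        ((S.filter fun s => ∀ e ∈ T, s ∈ A e).card : ZMod m))
      = (-1)^T.card * (k : ZMod m) + (if T ∈ X then (n : ZMod m) else 0) := by
    intro T hT
    rw [Finset.mem_powerset] at hT
    have := (ZMod.natCast_eq_natCast_iff _ _ _).2 (h T hT)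
    rw [this]
    push_cast
    rw [mul_add]
    congr 1
    by_cases hTX : T ∈ X
    · rw [if_pos hTX, if_pos hTX, mul_one]
      rcases Nat.even_or_odd T.card with he | ho
      · rw [he.neg_one_pow, one_mul]
      · rw [ho.neg_one_pow, neg_one_mul, neg_eq_iff_add_eq_zero, ← two_mul]
        exact_mod_cast hn0
    · simp [hTX]
  rw [Finset.sum_congr rfl hrepl, Finset.sum_add_distrib, ← Finset.sum_mul, aux_pow_sum,
    Finset.sum_ite_mem, Finset.inter_eq_right.2 (fun T hT => Finset.mem_powerset.2 (hX T hT)),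
    Finset.sum_const, nsmul_eq_mul]
  push_cast
  congr 1
  · split <;> ring
  · rcases Nat.even_or_odd X.card with he | ho
    · rw [if_neg (by simpa [Nat.not_odd_iff_even] using he), mul_zero]
      obtain ⟨q, hq⟩ := he
      rw [hq]
      push_cast
      calc ((q : ZMod m) + q) * n = q * (2 * n) := by ring
        _ = 0 := by rw [hn0]; ring
    · rw [if_pos ho, mul_one]
      obtain ⟨q, hq⟩ := ho
      rw [hq]
      push_cast
      calc (2 * (q : ZMod m) + 1) * n = q * (2 * n) + n := by ring
        _ = (n : ZMod m) := by rw [hn0]; ring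
end
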